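/- arXiv:2206.12635 — 3 statements merged into one kernel-verified Lean document; each statement's English description precedes it below -/
import Mathlib

section
/- (Isbell's 7-colouring.) Take r = 1/2 (so the tiles T(i, j) are regular hexagons of unit diameter) and let Λ be the subgroup of ℤ² generated by (3, −1) and (1, 2), which has index 7 in ℤ². Then the separation of the induced 7-colouring equals √7 / 2: for any two distinct tiles T(i, j) ≠ T(i', j') with (i − i', j − j') ∈ Λ and any p ∈ T(i, j), q ∈ T(i', j') one has dist(p, q) ≥ √7 / 2, and this bound is attained by some same-coloured pair of tiles. -/
noncomputable section

/-- The Euclidean plane ℝ². -/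
abbrev Plane := EuclideanSpace ℝ (Fin 2)

/-- The point (a, b) of the Euclidean plane. -/
def pt (a b : ℝ) : Plane := WithLp.toLp 2 ![a, b]

/-- The semi-regular hexagon K(r): with y = r/2 and x = √(1 − r²)/2, the closed convex
hull of the six points (0, 1/2), (x, y), (x, −y), (0, −1/2), (−x, −y), (−x, y). -/
def hexK (r : ℝ) : Set Plane :=
  convexHull ℝ
    {pt 0 (1 / 2), pt (Real.sqrt (1 - r ^ 2) / 2) (r / 2),
      pt (Real.sqrt (1 - r ^ 2) / 2) (-(r / 2)), pt 0 (-(1 / 2)),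
      pt (-(Real.sqrt (1 - r ^ 2) / 2)) (-(r / 2)),
      pt (-(Real.sqrt (1 - r ^ 2) / 2)) (r / 2)}

/-- The center c(i, j) = ((2i + j)·x, j·(y + 1/2)) of the tile with index (i, j). -/
def center (r : ℝ) (i j : ℤ) : Plane :=
  pt ((2 * (i : ℝ) + (j : ℝ)) * (Real.sqrt (1 - r ^ 2) / 2)) ((j : ℝ) * (r / 2 + 1 / 2))

/-- The tile T(i, j) = c(i, j) + K(r). -/
def tile (r : ℝ) (i j : ℤ) : Set Plane :=
  (fun p => center r i j + p) '' hexK r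

/-- The set of distances realized by points in two distinct same-coloured tiles,
for the colouring of the tiles T(i, j) by the cosets of a subgroup Λ ≤ ℤ²:
tiles T(i, j) and T(i', j') get the same colour iff (i − i', j − j') ∈ Λ.
The separation of the colouring is the infimum of this set. -/
def sameColourDists (r : ℝ) (Λ : AddSubgroup (ℤ × ℤ)) : Set ℝ :=
  {d : ℝ | ∃ (i j i' j' : ℤ) (p q : Plane),
    (i, j) ≠ (i', j') ∧ (i - i', j - j') ∈ Λ ∧
    p ∈ tile r i j ∧ q ∈ tile r i' j' ∧ d = dist p q}

end

/-!
The lattice Λ is the kernel of (a, b) ↦ a + 3b mod 7, hence of index 7. The tiles T(i, j) and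
T(i + a, j + b) have centres √(3N)/2 apart, where N = a² + ab + b². A short enumeration shows
that a nonzero (a, b) ∈ Λ has N = 7 or N ≥ 14. For N ≥ 14 the centres are at least 3 apart, and
the tiles lie in discs of radius 1/2. For N = 7, let g be the vector joining the two nearest
vertices of the tiles: every point of one tile has a larger inner product with g than every point
of the other, by a margin of ‖g‖² = 7/4, so by Cauchy–Schwarz the tiles are at least ‖g‖ = √7/2
apart, and that distance is attained at those vertices.
-/

open RealInnerProductSpace

theorem abs_inner_le_of_mem_convexHull {E : Type*} [NormedAddCommGroup E] [InnerProductSpace ℝ E]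
    {s : Set E} {g : E} {c : ℝ} (hs : ∀ z ∈ s, |⟪g, z⟫| ≤ c) {p : E}
    (hp : p ∈ convexHull ℝ s) : |⟪g, p⟫| ≤ c :=
  abs_le.mpr <| convexHull_min (fun z hz => abs_le.mp (hs z hz))
    ((convex_Icc (-c) c).linear_preimage (innerₛₗ ℝ g)) hp

theorem norm_le_norm_add_sub_of_abs_inner_le {E : Type*} [NormedAddCommGroup E]
    [InnerProductSpace ℝ E] {g v p q : E} {c : ℝ} (hp : |⟪g, p⟫| ≤ c) (hq : |⟪g, q⟫| ≤ c)
    (hv : ‖g‖ ^ 2 + 2 * c ≤ ⟪g, v⟫) : ‖g‖ ≤ ‖v + (p - q)‖ := by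
  have hinner : ‖g‖ ^ 2 ≤ ⟪g, v + (p - q)⟫ := by
    rw [inner_add_right, inner_sub_right]
    linarith [abs_le.mp hp, abs_le.mp hq]
  rcases (norm_nonneg g).eq_or_lt with hg | hg
  · exact hg ▸ norm_nonneg _
  · refine le_of_mul_le_mul_left ?_ hg
    nlinarith [real_inner_le_norm g (v + (p - q))]

theorem pt_add (a b c d : ℝ) : pt a b + pt c d = pt (a + c) (b + d) := by
  ext i; fin_cases i <;> rfl

theorem pt_sub (a b c d : ℝ) : pt a b - pt c d = pt (a - c) (b - d) := by
  ext i; fin_cases i <;> rfl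

theorem inner_pt (a b c d : ℝ) : ⟪pt a b, pt c d⟫ = a * c + b * d := by
  simp [pt, PiLp.inner_apply, Fin.sum_univ_two]
  ring

theorem norm_pt (a b : ℝ) : ‖pt a b‖ = √(a ^ 2 + b ^ 2) := by
  simp [pt, EuclideanSpace.norm_eq, Fin.sum_univ_two]

theorem sqrt_one_sub_half_sq : √(1 - (1 / 2 : ℝ) ^ 2) / 2 = √3 / 4 := by
  rw [show (1 - (1 / 2 : ℝ) ^ 2) = 3 / 2 ^ 2 by norm_num, Real.sqrt_div' _ (by norm_num),
    Real.sqrt_sq (by norm_num)]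
  ring

theorem hexK_half : hexK (1 / 2) = convexHull ℝ
    {pt 0 (1 / 2), pt (√3 / 4) (1 / 4), pt (√3 / 4) (-(1 / 4)), pt 0 (-(1 / 2)),
      pt (-(√3 / 4)) (-(1 / 4)), pt (-(√3 / 4)) (1 / 4)} := by
  rw [hexK, sqrt_one_sub_half_sq]
  norm_num

theorem center_half (a b : ℤ) : center (1 / 2) a b = pt ((2 * a + b) * (√3 / 4)) (b * (3 / 4)) := by
  rw [center, sqrt_one_sub_half_sq]
  norm_num

theorem center_sub_center (r : ℝ) (i j i' j' : ℤ) :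
    center r i j - center r i' j' = center r (i - i') (j - j') := by
  ext k; fin_cases k <;> simp [center, pt] <;> ring

theorem abs_inner_le_of_mem_hexK_half {g₀ g₁ c : ℝ} (h₁ : |g₁ / 2| ≤ c)
    (h₂ : |g₀ * (√3 / 4) + g₁ / 4| ≤ c) (h₃ : |g₀ * (√3 / 4) - g₁ / 4| ≤ c) {p : Plane}
    (hp : p ∈ hexK (1 / 2)) : |⟪pt g₀ g₁, p⟫| ≤ c := by
  rw [hexK_half] at hp
  refine abs_inner_le_of_mem_convexHull ?_ hp
  rw [abs_le] at h₁ h₂ h₃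
  rintro z (rfl | rfl | rfl | rfl | rfl | rfl) <;>
    · rw [inner_pt, abs_le]; constructor <;> linarith

theorem norm_le_half_of_mem_hexK_half {p : Plane} (hp : p ∈ hexK (1 / 2)) : ‖p‖ ≤ 1 / 2 := by
  rw [hexK_half] at hp
  refine mem_closedBall_zero_iff.mp (convexHull_min ?_ (convex_closedBall _ _) hp)
  have h3 : √3 ^ 2 = 3 := Real.sq_sqrt (by norm_num)
  rintro z (rfl | rfl | rfl | rfl | rfl | rfl) <;>
    · rw [mem_closedBall_zero_iff, norm_pt, Real.sqrt_le_left (by norm_num)]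
      nlinarith

theorem norm_center_half_sq (a b : ℤ) :
    ‖center (1 / 2) a b‖ ^ 2 = 3 / 4 * (a ^ 2 + a * b + b ^ 2 : ℤ) := by
  rw [center_half, norm_pt, Real.sq_sqrt (by positivity)]
  push_cast
  linear_combination (1 / 16 : ℝ) * (2 * a + b) ^ 2 * Real.sq_sqrt (show (0 : ℝ) ≤ 3 by norm_num)

local notation "Λ" => AddSubgroup.closure {((3 : ℤ), (-1 : ℤ)), ((1 : ℤ), (2 : ℤ))}

def isbellHom : ℤ × ℤ →+ ZMod 7 where
  toFun x := ((x.1 + 3 * x.2 : ℤ) : ZMod 7)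
  map_zero' := by simp
  map_add' x y := by simp only [Prod.fst_add, Prod.snd_add]; push_cast; ring

theorem isbell_closure_eq_ker : Λ = isbellHom.ker := by
  refine le_antisymm ((AddSubgroup.closure_le _).mpr ?_) fun ⟨a, b⟩ hab => ?_
  · rintro x (rfl | rfl) <;> exact AddMonoidHom.mem_ker.mpr (by decide)
  · obtain ⟨n, hn⟩ := (ZMod.intCast_zmod_eq_zero_iff_dvd _ 7).mp hab
    have hcomb : (a, b) = (2 * n - b) • ((3 : ℤ), (-1 : ℤ)) + n • ((1 : ℤ), (2 : ℤ)) := by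
      simp only [Prod.smul_mk, smul_eq_mul, Prod.mk_add_mk, Prod.mk.injEq]
      omega
    rw [hcomb]
    exact add_mem (zsmul_mem (AddSubgroup.subset_closure (by simp)) _)
      (zsmul_mem (AddSubgroup.subset_closure (by simp)) _)

theorem isbellHom_surjective : Function.Surjective isbellHom :=
  fun c => ⟨(c.val, 0), by simp [isbellHom]⟩

theorem isbell_index : (Λ).index = 7 := by
  rw [isbell_closure_eq_ker, AddSubgroup.index_ker,
    AddMonoidHom.range_eq_top_of_surjective _ isbellHom_surjective, Nat.card_congr
    AddSubgroup.topEquiv.toEquiv, Nat.card_zmod]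

theorem isbell_dvd_of_mem {a b : ℤ} (h : (a, b) ∈ Λ) : 7 ∣ a + 3 * b := by
  rwa [isbell_closure_eq_ker, AddMonoidHom.mem_ker, isbellHom, AddMonoidHom.coe_mk,
    ZeroHom.coe_mk, ZMod.intCast_zmod_eq_zero_iff_dvd] at h

/- The three bounds say that the support function of K(1/2) in the direction of the vector `g`
of `sqrt_seven_div_two_le_of_near` is at most 5/8. -/
theorem isbell_norm_cases {a b : ℤ} (h7 : 7 ∣ a + 3 * b) (hne : (a, b) ≠ 0) :
    14 ≤ a ^ 2 + a * b + b ^ 2 ∨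
      (a ^ 2 + a * b + b ^ 2 = 7 ∧
        |2 * a + 13 * b| ≤ 35 ∧ |13 * a + 11 * b| ≤ 35 ∧ |11 * a - 2 * b| ≤ 35) := by
  refine (le_or_gt 14 (a ^ 2 + a * b + b ^ 2)).imp_right fun hN => ?_
  have ha : -4 ≤ a ∧ a ≤ 4 := by constructor <;> nlinarith [sq_nonneg (a + 2 * b)]
  have hb : -4 ≤ b ∧ b ≤ 4 := by constructor <;> nlinarith [sq_nonneg (2 * a + b)]
  obtain ⟨ha₁, ha₂⟩ := ha
  obtain ⟨hb₁, hb₂⟩ := hb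
  interval_cases a <;> interval_cases b <;> simp_all +decide

theorem sqrt_seven_div_two_le_of_far {a b : ℤ} (hN : 14 ≤ a ^ 2 + a * b + b ^ 2) {p q : Plane}
    (hp : p ∈ hexK (1 / 2)) (hq : q ∈ hexK (1 / 2)) :
    √7 / 2 ≤ ‖center (1 / 2) a b + (p - q)‖ := by
  have hv : 3 ≤ ‖center (1 / 2) a b‖ := by
    have : (14 : ℝ) ≤ (a ^ 2 + a * b + b ^ 2 : ℤ) := by exact_mod_cast hN
    nlinarith [norm_center_half_sq a b, norm_nonneg (center (1 / 2) a b)]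
  have h7 : √7 / 2 ≤ 2 := by
    rw [div_le_iff₀ two_pos, Real.sqrt_le_left (by norm_num)]; norm_num
  calc √7 / 2 ≤ ‖center (1 / 2) a b‖ - (‖p‖ + ‖q‖) := by
        linarith [norm_le_half_of_mem_hexK_half hp, norm_le_half_of_mem_hexK_half hq]
    _ ≤ ‖center (1 / 2) a b‖ - ‖p - q‖ := by gcongr; exact norm_sub_le p q
    _ ≤ ‖center (1 / 2) a b + (p - q)‖ := norm_sub_le_norm_add _ _

theorem sqrt_seven_div_two_le_of_near {a b : ℤ} (hN : a ^ 2 + a * b + b ^ 2 = 7)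
    (h₁ : |2 * a + 13 * b| ≤ 35) (h₂ : |13 * a + 11 * b| ≤ 35) (h₃ : |11 * a - 2 * b| ≤ 35)
    {p q : Plane} (hp : p ∈ hexK (1 / 2)) (hq : q ∈ hexK (1 / 2)) :
    √7 / 2 ≤ ‖center (1 / 2) a b + (p - q)‖ := by
  -- `g` is c(a, b) rotated by arcsin(1/7) and scaled by 1/√3, so it respects the hexagonal
  -- symmetry; g(1, 2) = (√3/2, 1) joins the nearest vertices of T(0, 0) and T(1, 2).
  -- With N = a² + ab + b², ‖g‖² = N/4 and ⟪g, c(a, b)⟫ = 3N/7.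
  set g := pt (√3 * (8 * a + 3 * b) / 28) ((2 * a + 13 * b) / 28)
  have h3 : √3 ^ 2 = 3 := Real.sq_sqrt (by norm_num)
  have h7 : √7 ^ 2 = 7 := Real.sq_sqrt (by norm_num)
  have hN' : (a : ℝ) ^ 2 + a * b + b ^ 2 = 7 := by exact_mod_cast hN
  have hg : ‖g‖ = √7 / 2 := by
    rw [← sq_eq_sq₀ (norm_nonneg _) (by positivity), norm_pt, Real.sq_sqrt (by positivity)]
    linear_combination ((8 * a + 3 * b) ^ 2 / 784 : ℝ) * h3 + (1 / 4 : ℝ) * hN' - (1 / 4 : ℝ) * h7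
  have hg₀ : √3 * (8 * a + 3 * b) / 28 * (√3 / 4) = 3 * (8 * a + 3 * b) / 112 := by
    linear_combination ((8 * a + 3 * b) / 112 : ℝ) * h3
  have hsupport : ∀ z ∈ hexK (1 / 2), |⟪g, z⟫| ≤ 5 / 8 := by
    have h₁' : |(2 * a + 13 * b : ℝ)| ≤ 35 := by exact_mod_cast h₁
    have h₂' : |(13 * a + 11 * b : ℝ)| ≤ 35 := by exact_mod_cast h₂
    have h₃' : |(11 * a - 2 * b : ℝ)| ≤ 35 := by exact_mod_cast h₃
    rw [abs_le] at h₁' h₂' h₃'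
    intro z hz
    refine abs_inner_le_of_mem_hexK_half ?_ ?_ ?_ hz <;>
      · rw [abs_le]
        try rw [hg₀]
        constructor <;> linarith
  rw [← hg]
  refine norm_le_norm_add_sub_of_abs_inner_le (hsupport p hp) (hsupport q hq) (le_of_eq ?_)
  rw [hg, center_half, inner_pt]
  linear_combination
    (-(8 * a + 3 * b) * (2 * a + b) / 112 : ℝ) * h3 - (3 / 7 : ℝ) * hN' + (1 / 4 : ℝ) * h7

theorem sqrt_seven_div_two_mem_lowerBounds :
    √7 / 2 ∈ lowerBounds (sameColourDists (1 / 2) Λ) := by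
  rintro d ⟨i, j, i', j', p, q, hne, hmem, ⟨p₀, hp₀, rfl⟩, ⟨q₀, hq₀, rfl⟩, rfl⟩
  rw [dist_eq_norm, add_sub_add_comm, center_sub_center]
  have hne' : (i - i', j - j') ≠ 0 := by
    simpa [Prod.ext_iff, sub_eq_zero] using hne
  rcases isbell_norm_cases (isbell_dvd_of_mem hmem) hne' with hfar | ⟨hN, h₁, h₂, h₃⟩
  · exact sqrt_seven_div_two_le_of_far hfar hp₀ hq₀
  · exact sqrt_seven_div_two_le_of_near hN h₁ h₂ h₃ hp₀ hq₀

theorem sqrt_seven_div_two_mem_sameColourDists : √7 / 2 ∈ sameColourDists (1 / 2) Λ := by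
  refine ⟨1, 2, 0, 0, center (1 / 2) 1 2 + pt (-(√3 / 4)) (-(1 / 4)),
    center (1 / 2) 0 0 + pt (√3 / 4) (1 / 4), by decide, AddSubgroup.subset_closure (by simp),
    ⟨_, hexK_half ▸ subset_convexHull ℝ _ (by simp), rfl⟩,
    ⟨_, hexK_half ▸ subset_convexHull ℝ _ (by simp), rfl⟩, ?_⟩
  rw [dist_eq_norm, add_sub_add_comm, center_sub_center, center_half, pt_sub, pt_add, norm_pt,
    eq_comm, Real.sqrt_eq_iff_mul_self_eq_of_pos (by positivity)]
  have h3 : √3 ^ 2 = 3 := Real.sq_sqrt (by norm_num)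
  have h7 : √7 ^ 2 = 7 := Real.sq_sqrt (by norm_num)
  push_cast
  linear_combination (1 / 4 : ℝ) * h7 - (1 / 4 : ℝ) * h3

/-- Isbell's 7-colouring: with r = 1/2 (regular hexagons of unit diameter)
and Λ = ⟨(3, −1), (1, 2)⟩ ≤ ℤ² of index 7, the separation of the induced 7-colouring
equals √7 / 2, and this bound is attained by some same-coloured pair of tiles. -/
theorem statement5 :
    (AddSubgroup.closure {((3 : ℤ), (-1 : ℤ)), ((1 : ℤ), (2 : ℤ))}).index = 7 ∧
    IsLeast
      (sameColourDists (1 / 2) (AddSubgroup.closure {((3 : ℤ), (-1 : ℤ)), ((1 : ℤ), (2 : ℤ))}))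
      (Real.sqrt 7 / 2) :=
  ⟨isbell_index, sqrt_seven_div_two_mem_sameColourDists, sqrt_seven_div_two_mem_lowerBounds⟩
end

section
/- Take r = 3/8 (so x = √55/16, y = 3/16) and let Λ be the subgroup of ℤ² generated by (4, −3) and (1, 3), which has index 15 in ℤ². Then the separation of the induced 15-colouring of the tiles T(i, j) equals √(153/32), and this value is attained. -/
/-!
For same-coloured tiles T(i, j), T(i', j') we have 15 ∣ (j - j') - 3 (i - i'), so the centre
difference is (5 s x, 33/16 t) with s ≡ t (mod 2) and (s, t) ≠ (0, 0), where x = √55/16.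
Points of the two tiles differ by this vector plus a point of K - K = 2K, which obeys the
bounds |w₀| ≤ 2x, |w₁| ≤ 1 and 5/16 |w₀| + x |w₁| ≤ x coming from the edges of K. Up to
reflections, every shift other than (s, t) = (1, 1) is far away by crude bounds; for (1, 1) the
nearest point of -2K is the vertex -2 (x, 3/16), realised by the opposite vertices (x, 3/16) of
T(0, 0) and (-x, -3/16) of T(1, 3), at distance √(153/32).
-/

lemma pt_apply_zero (a b : ℝ) : pt a b 0 = a := rfl

lemma pt_apply_one (a b : ℝ) : pt a b 1 = b := rfl

lemma Plane.dist_eq (p q : Plane) : dist p q = √((p 0 - q 0) ^ 2 + (p 1 - q 1) ^ 2) := by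
  rw [EuclideanSpace.dist_eq, Fin.sum_univ_two, Real.dist_eq, Real.dist_eq, sq_abs, sq_abs]

lemma sq_abs_sub_abs_le_sq_add (a b : ℝ) : (|a| - |b|) ^ 2 ≤ (a + b) ^ 2 :=
  sq_le_sq.mpr (by simpa using abs_abs_sub_abs_le_abs_sub a (-b))

section Hexagon

variable {r : ℝ} {p : Plane}

lemma le_of_mem_hexK {a b c : ℝ} (hr : 0 ≤ r)
    (hside : |a| * (√(1 - r ^ 2) / 2) + |b| * (r / 2) ≤ c) (htop : |b| * (1 / 2) ≤ c)
    (hp : p ∈ hexK r) : a * p 0 + b * p 1 ≤ c := by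
  have hlin : IsLinearMap ℝ (fun q : Plane => a * q 0 + b * q 1) :=
    ⟨fun q q' => by simp only [PiLp.add_apply]; ring,
      fun m q => by simp only [PiLp.smul_apply, smul_eq_mul]; ring⟩
  refine convexHull_min ?_ (convex_halfSpace_le hlin c) hp
  intro v hv
  change a * v 0 + b * v 1 ≤ c
  have hv_le : a * v 0 + b * v 1 ≤ |a| * |v 0| + |b| * |v 1| := by
    rw [← abs_mul, ← abs_mul]
    exact add_le_add (le_abs_self _) (le_abs_self _)
  have hx : 0 ≤ √(1 - r ^ 2) / 2 := by positivity
  simp only [Set.mem_insert_iff, Set.mem_singleton_iff] at hv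
  rcases hv with rfl | rfl | rfl | rfl | rfl | rfl <;>
    simp only [pt_apply_zero, pt_apply_one, abs_neg, abs_zero, abs_of_nonneg hx,
      abs_of_nonneg (by positivity : (0 : ℝ) ≤ r / 2),
      abs_of_nonneg (by norm_num : (0 : ℝ) ≤ 1 / 2),
      mul_zero, zero_add] at hv_le ⊢ <;>
    linarith

lemma mul_abs_add_mul_abs_le_of_mem_hexK {a b c : ℝ} (hr : 0 ≤ r) (ha : 0 ≤ a) (hb : 0 ≤ b)
    (hside : a * (√(1 - r ^ 2) / 2) + b * (r / 2) ≤ c) (htop : b * (1 / 2) ≤ c)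
    (hp : p ∈ hexK r) : a * |p 0| + b * |p 1| ≤ c := by
  have key : ∀ a' b' : ℝ, |a'| = a → |b'| = b → a' * p 0 + b' * p 1 ≤ c := by
    rintro a' b' rfl rfl
    exact le_of_mem_hexK hr hside htop hp
  rcases abs_cases (p 0) with ⟨h0, -⟩ | ⟨h0, -⟩ <;>
    rcases abs_cases (p 1) with ⟨h1, -⟩ | ⟨h1, -⟩ <;> rw [h0, h1]
  · exact key a b (abs_of_nonneg ha) (abs_of_nonneg hb)
  · simpa using key a (-b) (abs_of_nonneg ha) (by rw [abs_neg, abs_of_nonneg hb])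
  · simpa using key (-a) b (by rw [abs_neg, abs_of_nonneg ha]) (abs_of_nonneg hb)
  · simpa using
      key (-a) (-b) (by rw [abs_neg, abs_of_nonneg ha]) (by rw [abs_neg, abs_of_nonneg hb])

lemma abs_le_of_mem_hexK (hr₀ : 0 ≤ r) (hr₁ : r ≤ 1) (hp : p ∈ hexK r) :
    |p 0| ≤ √(1 - r ^ 2) / 2 ∧ |p 1| ≤ 1 / 2 ∧
      (1 - r) / 2 * |p 0| + √(1 - r ^ 2) / 2 * |p 1| ≤ √(1 - r ^ 2) / 2 / 2 := by
  have hx : 0 ≤ √(1 - r ^ 2) / 2 := by positivity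
  refine ⟨?_, ?_, ?_⟩
  · simpa using mul_abs_add_mul_abs_le_of_mem_hexK (b := 0) hr₀ zero_le_one le_rfl
      (by linarith) (by linarith) hp
  · simpa using mul_abs_add_mul_abs_le_of_mem_hexK (a := 0) hr₀ le_rfl zero_le_one
      (by linarith) (by linarith) hp
  · exact mul_abs_add_mul_abs_le_of_mem_hexK hr₀ (by linarith) hx (by linarith) (by linarith) hp

lemma abs_sub_le_of_mem_hexK {u v : Plane} (hr₀ : 0 ≤ r) (hr₁ : r ≤ 1)
    (hu : u ∈ hexK r) (hv : v ∈ hexK r) :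
    |u 0 - v 0| ≤ 2 * (√(1 - r ^ 2) / 2) ∧ |u 1 - v 1| ≤ 1 ∧
      (1 - r) / 2 * |u 0 - v 0| + √(1 - r ^ 2) / 2 * |u 1 - v 1| ≤ √(1 - r ^ 2) / 2 := by
  obtain ⟨hu₀, hu₁, hu₂⟩ := abs_le_of_mem_hexK hr₀ hr₁ hu
  obtain ⟨hv₀, hv₁, hv₂⟩ := abs_le_of_mem_hexK hr₀ hr₁ hv
  have h₀ := abs_sub (u 0) (v 0)
  have h₁ := abs_sub (u 1) (v 1)
  have hx : 0 ≤ √(1 - r ^ 2) / 2 := by positivity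
  refine ⟨by linarith, by linarith, ?_⟩
  have := mul_le_mul_of_nonneg_left h₀ (by linarith : 0 ≤ (1 - r) / 2)
  have := mul_le_mul_of_nonneg_left h₁ hx
  linarith

end Hexagon

section Shift

variable {X W₁ W₂ : ℝ}

/-- `(−2X, −3/8)` is the point of `−2 K(3/8)` nearest to `−(5X, 33/16)`: the difference
`(3X, 27/16)` is the positive combination `30/(256X) • (1, 0) + 27/(16X) • (5/16, X)` of the
inner normals of the two edges through that vertex, whence the identity `hid`. -/
lemma le_sq_add_sq_of_vertex (hX : 0 < X) (hX2 : X ^ 2 = 55 / 256) (h₁ : -2 * X ≤ W₁)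
    (h₂ : -X ≤ 5 / 16 * W₁ + X * W₂) :
    153 / 32 ≤ (5 * X + W₁) ^ 2 + (33 / 16 + W₂) ^ 2 := by
  have hmul : 0 ≤ X * ((5 * X + W₁) ^ 2 + (33 / 16 + W₂) ^ 2 - 153 / 32) := by
    have hid : X * ((5 * X + W₁) ^ 2 + (33 / 16 + W₂) ^ 2 - 153 / 32) =
        X * (W₁ + 2 * X) ^ 2 + X * (W₂ + 3 / 8) ^ 2 +
          2 * (30 / 256 * (W₁ + 2 * X) + 27 / 16 * (5 / 16 * W₁ + X * W₂ + X)) := by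
      linear_combination (6 * W₁ + 21 * X) * hX2
    rw [hid]
    have := mul_nonneg hX.le (sq_nonneg (W₁ + 2 * X))
    have := mul_nonneg hX.le (sq_nonneg (W₂ + 3 / 8))
    linarith
  linarith [nonneg_of_mul_nonneg_right hmul hX]

lemma le_sq_add_sq_of_shift (hX : 0 < X) (hX2 : X ^ 2 = 55 / 256) (h₁ : -2 * X ≤ W₁)
    (h₂ : -1 ≤ W₂) (h₃ : -X ≤ 5 / 16 * W₁ + X * W₂) {S T : ℕ} (hST : 2 ≤ S + T) :
    153 / 32 ≤ (5 * S * X + W₁) ^ 2 + (33 / 16 * T + W₂) ^ 2 := by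
  rcases (by omega : (1 ≤ S ∧ 1 ≤ T) ∨ 2 ≤ S ∨ 2 ≤ T) with ⟨hS, hT⟩ | hS | hT
  · have hS' : (1 : ℝ) ≤ S := by exact_mod_cast hS
    have hT' : (1 : ℝ) ≤ T := by exact_mod_cast hT
    calc 153 / 32 ≤ (5 * X + W₁) ^ 2 + (33 / 16 + W₂) ^ 2 := le_sq_add_sq_of_vertex hX hX2 h₁ h₃
      _ ≤ (5 * S * X + W₁) ^ 2 + (33 / 16 * T + W₂) ^ 2 := by
        gcongr
        · linarith
        · nlinarith
        · linarith
        · linarith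
  · have hS' : (2 : ℝ) ≤ S := by exact_mod_cast hS
    have : 8 * X ≤ 5 * S * X + W₁ := by nlinarith
    nlinarith [sq_nonneg (33 / 16 * T + W₂)]
  · have hT' : (2 : ℝ) ≤ T := by exact_mod_cast hT
    have : 25 / 8 ≤ 33 / 16 * T + W₂ := by linarith
    nlinarith [sq_nonneg (5 * S * X + W₁)]

end Shift

section Lattice

def colourLattice : AddSubgroup (ℤ × ℤ) := AddSubgroup.closure {(4, -3), (1, 3)}

def colourCharacter : ℤ × ℤ →+ ZMod 15 :=
  (Int.castAddHom (ZMod 15)).comp (AddMonoidHom.snd ℤ ℤ - 3 • AddMonoidHom.fst ℤ ℤ)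

lemma colourCharacter_apply (m n : ℤ) :
    colourCharacter (m, n) = ((n - 3 * m : ℤ) : ZMod 15) := by
  simp [colourCharacter]

lemma mem_ker_colourCharacter {m n : ℤ} : (m, n) ∈ colourCharacter.ker ↔ 15 ∣ n - 3 * m := by
  rw [AddMonoidHom.mem_ker, colourCharacter_apply, ZMod.intCast_zmod_eq_zero_iff_dvd]
  rfl

lemma colourLattice_eq_ker : colourLattice = colourCharacter.ker := by
  refine le_antisymm ((AddSubgroup.closure_le _).mpr ?_) ?_
  · rintro v (rfl | rfl) <;> exact mem_ker_colourCharacter.mpr (by norm_num)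
  · rintro ⟨m, n⟩ hmn
    obtain ⟨k, hk⟩ := mem_ker_colourCharacter.mp hmn
    have hgen : (m, n) = (m + 4 * k) • ((1 : ℤ), (3 : ℤ)) + (-k) • ((4 : ℤ), (-3 : ℤ)) := by
      simp only [Prod.smul_mk, smul_eq_mul, Prod.mk_add_mk, Prod.mk.injEq]
      omega
    rw [hgen]
    exact add_mem (AddSubgroup.zsmul_mem _ (AddSubgroup.subset_closure (by simp)) _)
      (AddSubgroup.zsmul_mem _ (AddSubgroup.subset_closure (by simp)) _)

lemma colourCharacter_surjective : Function.Surjective colourCharacter := fun n => by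
  obtain ⟨m, rfl⟩ := ZMod.intCast_surjective n
  exact ⟨(0, m), by simp [colourCharacter_apply]⟩

lemma colourLattice_index : colourLattice.index = 15 := by
  rw [colourLattice_eq_ker, AddSubgroup.index_ker,
    AddMonoidHom.range_eq_top.mpr colourCharacter_surjective, AddSubgroup.card_top,
    Nat.card_zmod]

lemma mem_colourLattice {m n : ℤ} : (m, n) ∈ colourLattice ↔ 15 ∣ n - 3 * m := by
  rw [colourLattice_eq_ker, mem_ker_colourCharacter]

lemma exists_shift_of_mem_colourLattice {a b : ℤ} (h : (a, b) ∈ colourLattice)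
    (hne : (a, b) ≠ 0) : ∃ s t : ℤ, 2 * a + b = 5 * s ∧ b = 3 * t ∧ 2 ≤ s.natAbs + t.natAbs := by
  obtain ⟨k, hk⟩ := mem_colourLattice.mp h
  refine ⟨a + 3 * k, a + 5 * k, by omega, by omega, ?_⟩
  have : ¬ (a = 0 ∧ b = 0) := fun ⟨ha, hb⟩ => hne (by simp [ha, hb])
  omega

end Lattice

lemma dist_center_add_sq (r : ℝ) (i j i' j' : ℤ) (u v : Plane) :
    dist (center r i j + u) (center r i' j' + v) ^ 2 =
      (((2 * (i - i') + (j - j') : ℤ) : ℝ) * (√(1 - r ^ 2) / 2) + (u 0 - v 0)) ^ 2 +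
        (((j - j' : ℤ) : ℝ) * (r / 2 + 1 / 2) + (u 1 - v 1)) ^ 2 := by
  rw [Plane.dist_eq, Real.sq_sqrt (by positivity)]
  simp only [center, PiLp.add_apply, pt_apply_zero, pt_apply_one]
  push_cast
  ring

lemma sqrt_le_dist_of_mem_tile {i j i' j' : ℤ} {p q : Plane} (hne : (i, j) ≠ (i', j'))
    (hmem : (i - i', j - j') ∈ colourLattice) (hp : p ∈ tile (3 / 8) i j)
    (hq : q ∈ tile (3 / 8) i' j') : √(153 / 32) ≤ dist p q := by
  obtain ⟨u, hu, rfl⟩ := hp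
  obtain ⟨v, hv, rfl⟩ := hq
  obtain ⟨s, t, hs, ht, hst⟩ :=
    exists_shift_of_mem_colourLattice hmem (by simpa [sub_eq_zero] using hne)
  obtain ⟨h₀, h₁, h₂⟩ := abs_sub_le_of_mem_hexK (by norm_num) (by norm_num) hu hv
  set X := √(1 - (3 / 8 : ℝ) ^ 2) / 2
  have hX : 0 < X := by positivity
  have hX2 : X ^ 2 = 55 / 256 := by rw [div_pow, Real.sq_sqrt (by norm_num)]; norm_num
  rw [Real.sqrt_le_left dist_nonneg, dist_center_add_sq, hs, ht]
  calc 153 / 32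
        ≤ (5 * s.natAbs * X + -|u 0 - v 0|) ^ 2 + (33 / 16 * t.natAbs + -|u 1 - v 1|) ^ 2 :=
        le_sq_add_sq_of_shift hX hX2 (by linarith) (by linarith) (by linarith) hst
    _ = (|5 * s * X| - |u 0 - v 0|) ^ 2 + (|(33 / 16 : ℝ) * t| - |u 1 - v 1|) ^ 2 := by
        simp only [Nat.cast_natAbs, Int.cast_abs, abs_mul, Nat.abs_ofNat, abs_of_pos hX]
        ring
    _ ≤ (5 * s * X + (u 0 - v 0)) ^ 2 + (33 / 16 * t + (u 1 - v 1)) ^ 2 :=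
        add_le_add (sq_abs_sub_abs_le_sq_add _ _) (sq_abs_sub_abs_le_sq_add _ _)
    _ = _ := by push_cast; ring

lemma dist_witness_vertices :
    dist (center (3 / 8) 0 0 + pt (√(1 - (3 / 8) ^ 2) / 2) (3 / 8 / 2))
      (center (3 / 8) 1 3 + pt (-(√(1 - (3 / 8) ^ 2) / 2)) (-(3 / 8 / 2))) = √(153 / 32) := by
  rw [← Real.sqrt_sq dist_nonneg, dist_center_add_sq]
  have hX2 : (√(1 - (3 / 8 : ℝ) ^ 2) / 2) ^ 2 = 55 / 256 := by
    rw [div_pow, Real.sq_sqrt (by norm_num)]; norm_num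
  congr 1
  simp only [pt_apply_zero, pt_apply_one]
  push_cast
  linear_combination 9 * hX2

/-- with r = 3/8 and Λ = ⟨(4, -3), (1, 3)⟩ ≤ ℤ² of index 15,
the separation of the induced 15-colouring of the tiles T(i, j) equals the stated
value, and this value is attained. -/
theorem statement12 :
    (AddSubgroup.closure {(((4) : ℤ), ((-3) : ℤ)), (((1) : ℤ), ((3) : ℤ))}).index = 15 ∧
    IsLeast
      (sameColourDists (3 / 8)
        (AddSubgroup.closure {(((4) : ℤ), ((-3) : ℤ)), (((1) : ℤ), ((3) : ℤ))}))
      (Real.sqrt (153 / 32)) := by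
  refine ⟨colourLattice_index, ⟨0, 0, 1, 3, _, _, by decide, mem_colourLattice.mpr (by norm_num),
    ⟨_, subset_convexHull ℝ _ (by simp), rfl⟩, ⟨_, subset_convexHull ℝ _ (by simp), rfl⟩,
    dist_witness_vertices.symm⟩, ?_⟩
  rintro d ⟨i, j, i', j', p, q, hne, hmem, hp, hq, rfl⟩
  exact sqrt_le_dist_of_mem_tile hne hmem hp hq
end

section
/- There exist a closed convex hexagon H ⊂ ℝ² of Euclidean diameter at most 1, a countable family of isometric copies of H whose union is all of ℝ² and whose interiors are pairwise disjoint (a tiling of the plane by congruent tiles), and a colouring of these tiles with 6 colours, such that any two distinct tiles of the same colour are at Euclidean distance at least 0.9920 from each other (i.e. dist(p, q) ≥ 0.9920 for all points p, q in the two tiles). This improves Ivanov's bound d(6) ≈ 0.991445. -/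
/-!
The tiles are the Voronoi cells of the lattice `Λ = ℤ t₁ + ℤ t₂` with `t₁ = (0.49605, 0)` and
`t₂ = (-0.38, 0.9164)`. Its Voronoi cell `H` is a centrally symmetric hexagon whose vertices, the
circumcentres of the Delaunay triangles, lie just inside the circle of radius `1/2`. The tile
`λ + H` is coloured by the class of `λ` in `Λ / (3ℤ t₁ + 2ℤ t₂) ≃ ℤ/3 × ℤ/2`, so two tiles of the
same colour differ by a nonzero `μ = 3k t₁ + 2l t₂`. If `‖μ‖ ≥ 1.992` the diameter bound keeps
them apart; up to sign the only shorter such `μ` are `3 t₁`, `2 t₂` and `3 t₁ + 2 t₂`, and for each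
of these an explicit slab of width at least `0.9920` separates `H` from `μ + H`.
-/

noncomputable section

open scoped RealInnerProductSpace Pointwise
open Set Metric Filter Topology

section Convex

variable {E : Type*} [AddCommGroup E] [Module ℝ E]

theorem Convex.smul_add_smul_mem_of_zero_mem {K : Set E} (hK : Convex ℝ K) (h0 : 0 ∈ K)
    {p q : E} (hp : p ∈ K) (hq : q ∈ K) {a b : ℝ} (ha : 0 ≤ a) (hb : 0 ≤ b) (hab : a + b ≤ 1) :
    a • p + b • q ∈ K := by
  have h := hK.sum_mem (t := Finset.univ) (w := ![a, b, 1 - a - b]) (z := ![p, q, 0])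
    (by intro i _; fin_cases i <;> simp [ha, hb]; linarith)
    (by simp [Fin.sum_univ_three])
    (by intro i _; fin_cases i <;> simp [hp, hq, h0])
  simpa [Fin.sum_univ_three] using h

end Convex

section InnerProductSpace

variable {E : Type*} [NormedAddCommGroup E] [InnerProductSpace ℝ E]

theorem inner_le_of_mem_convexHull {s : Set E} {ν x : E} {c : ℝ} (h : ∀ z ∈ s, ⟪ν, z⟫ ≤ c)
    (hx : x ∈ convexHull ℝ s) : ⟪ν, x⟫ ≤ c :=
  convexHull_min h (convex_halfSpace_le (innerₛₗ ℝ ν).isLinear c) hx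

theorem notMem_convexHull_image_of_inner_lt_norm_sq {ι : Type*} {v : ι → E} {i : ι}
    (h : ∀ j ≠ i, ⟪v i, v j⟫ < ‖v i‖ ^ 2) : v i ∉ convexHull ℝ (v '' {j | j ≠ i}) := by
  intro hi
  have := convexHull_min (t := {x | ⟪v i, x⟫ < ‖v i‖ ^ 2}) (by rintro _ ⟨j, hj, rfl⟩; exact h j hj)
    (convex_halfSpace_lt (innerₛₗ ℝ (v i)).isLinear _) hi
  simp at this

theorem injective_of_inner_lt_norm_sq {ι : Type*} {v : ι → E}
    (h : ∀ i j, i ≠ j → ⟪v i, v j⟫ < ‖v i‖ ^ 2) : Function.Injective v := by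
  intro i j hij
  by_contra hne
  simpa [hij, real_inner_self_eq_norm_sq] using h i j hne

theorem norm_le_norm_sub_iff (y l : E) : ‖y‖ ≤ ‖y - l‖ ↔ 2 * ⟪y, l⟫ ≤ ‖l‖ ^ 2 := by
  rw [← sq_le_sq₀ (norm_nonneg _) (norm_nonneg _), norm_sub_sq_real]
  constructor <;> intro <;> linarith

theorem dist_lt_dist_of_mem_interior {a b y : E} (hab : a ≠ b)
    (hy : y ∈ interior {z | dist z a ≤ dist z b}) : dist y a < dist y b := by
  set v := b - a
  obtain ⟨t, hz, ht⟩ : ∃ t : ℝ, dist (y + t • v) a ≤ dist (y + t • v) b ∧ 0 < t := by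
    have hline : Tendsto (fun t : ℝ => y + t • v) (𝓝[>] 0) (𝓝 y) := by
      have : Continuous fun t : ℝ => y + t • v := by fun_prop
      simpa using (this.tendsto 0).mono_left nhdsWithin_le_nhds
    exact ((hline.eventually (mem_interior_iff_mem_nhds.1 hy)).and self_mem_nhdsWithin).exists
  have hv : 0 < ‖v‖ := norm_pos_iff.2 (sub_ne_zero.2 hab.symm)
  have hshift : ∀ c : E,
      ‖y + t • v - c‖ ^ 2 = ‖y - c‖ ^ 2 + 2 * t * ⟪y - c, v⟫ + t ^ 2 * ‖v‖ ^ 2 := by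
    intro c
    rw [add_sub_right_comm, norm_add_sq_real, real_inner_smul_right, norm_smul, mul_pow,
      Real.norm_eq_abs, sq_abs]
    ring
  have hab' : ⟪y - b, v⟫ = ⟪y - a, v⟫ - ‖v‖ ^ 2 := by
    rw [← real_inner_self_eq_norm_sq, ← inner_sub_left]
    congr 1
    simp only [v]; abel
  rw [dist_eq_norm, dist_eq_norm, ← sq_le_sq₀ (norm_nonneg _) (norm_nonneg _), hshift, hshift,
    hab'] at hz
  rw [dist_eq_norm, dist_eq_norm, ← sq_lt_sq₀ (norm_nonneg _) (norm_nonneg _)]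
  nlinarith [mul_pos ht (pow_pos hv 2)]

/-- `K` and `μ + K` lie on either side of the slab of width `‖ν‖` normal to `ν = μ - 2 • p`. -/
theorem norm_sub_two_smul_le_dist {K : Set E} (hK : ∀ z ∈ K, -z ∈ K) {μ p : E}
    (hp : ∀ z ∈ K, ⟪μ - (2 : ℝ) • p, z⟫ ≤ ⟪μ - (2 : ℝ) • p, p⟫) {x y : E} (hx : x ∈ K)
    (hy : y ∈ K) : ‖μ - (2 : ℝ) • p‖ ≤ dist (μ + x) y := by
  set ν := μ - (2 : ℝ) • p
  have hνν : ⟪ν, ν⟫ = ⟪ν, μ⟫ - 2 * ⟪ν, p⟫ := by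
    simp only [ν, inner_sub_right, real_inner_smul_right]
  have hsep : ‖ν‖ ^ 2 ≤ ⟪ν, μ + x - y⟫ := by
    have h₁ := hp (-x) (hK x hx)
    have h₂ := hp y hy
    rw [inner_neg_right] at h₁
    rw [← real_inner_self_eq_norm_sq, hνν, inner_sub_right, inner_add_right]
    linarith
  have hcs := real_inner_le_norm ν (μ + x - y)
  rw [dist_eq_norm]
  nlinarith [norm_nonneg ν, norm_nonneg (μ + x - y)]

end InnerProductSpace

section NormedAddCommGroup

variable {E : Type*} [NormedAddCommGroup E]

theorem norm_le_norm_sub_of_norm_le_half {x l : E} (hx : ‖x‖ ≤ 1 / 2) (hl : 1 ≤ ‖l‖) :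
    ‖x‖ ≤ ‖x - l‖ := by
  have := norm_sub_norm_le l x
  rw [norm_sub_rev] at this
  linarith

theorem norm_sub_two_mul_le_dist {K : Set E} {r : ℝ} (hK : ∀ z ∈ K, ‖z‖ ≤ r) (μ : E) {x y : E}
    (hx : x ∈ K) (hy : y ∈ K) : ‖μ‖ - 2 * r ≤ dist (μ + x) y := by
  have : ‖μ‖ ≤ ‖μ + x - y‖ + ‖x‖ + ‖y‖ := by
    calc ‖μ‖ = ‖(μ + x - y) - x + y‖ := by abel_nf
      _ ≤ ‖μ + x - y‖ + ‖x‖ + ‖y‖ := (norm_add_le _ _).trans (by gcongr; exact norm_sub_le _ _)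
  rw [dist_eq_norm]
  linarith [hK x hx, hK y hy]

end NormedAddCommGroup

section Voronoi

variable {E : Type*}

def voronoiCell [PseudoMetricSpace E] (Λ : Set E) (a : E) : Set E :=
  {y | ∀ l ∈ Λ, dist y a ≤ dist y l}

theorem exists_mem_voronoiCell [PseudoMetricSpace E] [ProperSpace E] {Λ : Set E}
    (hΛ : IsClosed Λ) (hne : Λ.Nonempty) (x : E) : ∃ a ∈ Λ, x ∈ voronoiCell Λ a := by
  obtain ⟨a, ha, hx⟩ := hΛ.exists_infDist_eq_dist hne x
  exact ⟨a, ha, fun l hl => hx ▸ infDist_le_dist_of_mem hl⟩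

theorem vadd_voronoiCell_zero [NormedAddCommGroup E] (Λ : AddSubgroup E) {a : E} (ha : a ∈ Λ) :
    a +ᵥ voronoiCell (Λ : Set E) 0 = voronoiCell Λ a := by
  ext y
  simp only [mem_vadd_set_iff_neg_vadd_mem, voronoiCell, mem_ofPred_eq, vadd_eq_add, dist_eq_norm,
    sub_zero, SetLike.mem_coe, neg_add_eq_sub]
  constructor
  · intro h l hl
    simpa [sub_sub] using h (l - a) (Λ.sub_mem hl ha)
  · intro h l hl
    simpa [sub_sub] using h (a + l) (Λ.add_mem ha hl)

variable [NormedAddCommGroup E] [InnerProductSpace ℝ E]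

theorem convex_voronoiCell_zero (Λ : Set E) : Convex ℝ (voronoiCell Λ 0) := by
  have : voronoiCell Λ 0 = ⋂ l ∈ Λ, {y | 2 * ⟪y, l⟫ ≤ ‖l‖ ^ 2} := by
    ext y
    simp [voronoiCell, dist_eq_norm, norm_le_norm_sub_iff]
  rw [this]
  exact convex_iInter₂ fun l _ =>
    convex_halfSpace_le ⟨fun x y => by rw [inner_add_left, mul_add],
      fun c x => by rw [real_inner_smul_left, smul_eq_mul]; ring⟩ _

theorem disjoint_interior_voronoiCell {Λ : Set E} {a b : E} (ha : a ∈ Λ) (hb : b ∈ Λ)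
    (hab : a ≠ b) : Disjoint (interior (voronoiCell Λ a)) (interior (voronoiCell Λ b)) := by
  have hsub : ∀ {c d : E}, d ∈ Λ →
      interior (voronoiCell Λ c) ⊆ interior {z | dist z c ≤ dist z d} :=
    fun hd => interior_mono fun z hz => hz _ hd
  refine Set.disjoint_left.2 fun y hya hyb => ?_
  exact (dist_lt_dist_of_mem_interior hab (hsub hb hya)).not_ge
    (dist_lt_dist_of_mem_interior hab.symm (hsub ha hyb)).le

end Voronoi

section Plane

theorem Plane.inner_eq (x y : Plane) : ⟪x, y⟫ = x 0 * y 0 + x 1 * y 1 := by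
  simp [PiLp.inner_apply, Fin.sum_univ_two, mul_comm]

theorem Plane.norm_sq_eq (x : Plane) : ‖x‖ ^ 2 = x 0 ^ 2 + x 1 ^ 2 := by
  simp [EuclideanSpace.norm_sq_eq, Fin.sum_univ_two]

def Plane.cross (p q : Plane) : ℝ := p 0 * q 1 - p 1 * q 0

open Plane

theorem Plane.cross_smul_eq (p q y : Plane) : cross p q • y = cross y q • p + cross p y • q := by
  ext i; fin_cases i <;> simp [cross] <;> ring

theorem Plane.mem_of_cross_nonneg {K : Set Plane} (hK : Convex ℝ K) (h0 : 0 ∈ K)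
    {p q ℓ y : Plane} {c : ℝ} (hp : p ∈ K) (hq : q ∈ K) (hpq : 0 < cross p q)
    (hpy : 0 ≤ cross p y) (hyq : 0 ≤ cross y q) (hc : 0 < c) (hpℓ : ⟪p, ℓ⟫ = c)
    (hqℓ : ⟪q, ℓ⟫ = c) (hyℓ : ⟪y, ℓ⟫ ≤ c) : y ∈ K := by
  have hy : y = (cross y q / cross p q) • p + (cross p y / cross p q) • q := by
    rw [div_eq_inv_mul, div_eq_inv_mul, mul_smul, mul_smul, ← smul_add, ← cross_smul_eq,
      inv_smul_smul₀ hpq.ne']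
  have hab : (cross y q / cross p q + cross p y / cross p q) * c ≤ 1 * c := by
    rw [hy, inner_add_left, real_inner_smul_left, real_inner_smul_left, hpℓ, hqℓ] at hyℓ
    linarith
  rw [hy]
  exact hK.smul_add_smul_mem_of_zero_mem h0 hp hq (div_nonneg hyq hpq.le) (div_nonneg hpy hpq.le)
    (le_of_mul_le_mul_right hab hc)

def Plane.symmHexVertex (u₀ u₁ u₂ : Plane) : Fin 6 → Plane := ![u₀, u₁, u₂, -u₀, -u₁, -u₂]

theorem Plane.exists_cross_symmHexVertex_nonneg (u₀ u₁ u₂ y : Plane) :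
    ∃ i, 0 ≤ cross (symmHexVertex u₀ u₁ u₂ i) y ∧ 0 ≤ cross y (symmHexVertex u₀ u₁ u₂ (i + 1)) := by
  have hneg : ∀ p, cross (-p) y = -cross p y := fun p => by simp [cross]; ring
  have hswap : ∀ p, cross y p = -cross p y := fun p => by simp [cross]; ring
  by_cases h₀ : 0 ≤ cross u₀ y <;> by_cases h₁ : 0 ≤ cross u₁ y <;>
    by_cases h₂ : 0 ≤ cross u₂ y <;>
    first
    | (refine ⟨0, ?_⟩; simp [symmHexVertex, hswap]; constructor <;> linarith)
    | (refine ⟨1, ?_⟩; simp [symmHexVertex, hswap]; constructor <;> linarith)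
    | (refine ⟨2, ?_⟩; simp [symmHexVertex, hneg, hswap]; constructor <;> linarith)
    | (refine ⟨3, ?_⟩; simp [symmHexVertex, hneg, hswap]; constructor <;> linarith)
    | (refine ⟨4, ?_⟩; simp [symmHexVertex, hneg, hswap]; constructor <;> linarith)
    | (refine ⟨5, ?_⟩; simp [symmHexVertex, hneg, hswap]; constructor <;> linarith)

theorem Plane.neg_mem_convexHull_symmHexVertex (u₀ u₁ u₂ : Plane) {z : Plane}
    (hz : z ∈ convexHull ℝ (range (symmHexVertex u₀ u₁ u₂))) :
    -z ∈ convexHull ℝ (range (symmHexVertex u₀ u₁ u₂)) := by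
  refine convexHull_mono ?_ (by rwa [convexHull_neg, Set.neg_mem_neg])
  rintro x ⟨i, hi⟩
  refine ⟨i + 3, ?_⟩
  rw [← neg_neg x, ← hi]
  fin_cases i <;> simp [symmHexVertex]

end Plane

namespace HexTiling

open Plane

def t₁ : Plane := !₂[9921 / 20000, 0]

def t₂ : Plane := !₂[-19 / 50, 2291 / 2500]

def lattice : ℤ × ℤ →+ Plane := (zmultiplesHom Plane t₁).coprod (zmultiplesHom Plane t₂)

@[simp] theorem lattice_apply_zero (p : ℤ × ℤ) :
    lattice p 0 = p.1 * (9921 / 20000) - p.2 * (19 / 50) := by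
  simp [lattice, t₁, t₂]; ring

@[simp] theorem lattice_apply_one (p : ℤ × ℤ) : lattice p 1 = p.2 * (2291 / 2500) := by
  simp [lattice, t₁, t₂]

theorem sq_add_sq_div_five_le_norm_lattice_sq (m n : ℤ) :
    ((m : ℝ) ^ 2 + (n : ℝ) ^ 2) / 5 ≤ ‖lattice (m, n)‖ ^ 2 := by
  rw [norm_sq_eq, lattice_apply_zero, lattice_apply_one]
  nlinarith [sq_nonneg ((18426241 : ℝ) * m - 75399600 * n), sq_nonneg (m : ℝ), sq_nonneg (n : ℝ)]

theorem eight_fifths_mul_le_norm_lattice_sq (k l : ℤ) :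
    8 / 5 * ((k : ℝ) ^ 2 + (l : ℝ) ^ 2) ≤ ‖lattice (3 * k, 2 * l)‖ ^ 2 := by
  rw [norm_sq_eq, lattice_apply_zero, lattice_apply_one]
  push_cast
  nlinarith [sq_nonneg ((245836169 : ℝ) * k - 452397600 * l), sq_nonneg (k : ℝ), sq_nonneg (l : ℝ)]

theorem one_fifth_le_norm_lattice_sq {p : ℤ × ℤ} (hp : p ≠ 0) : 1 / 5 ≤ ‖lattice p‖ ^ 2 := by
  obtain ⟨m, n⟩ := p
  have h : (1 : ℝ) ≤ (m : ℝ) ^ 2 + (n : ℝ) ^ 2 := by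
    have hmn : m ≠ 0 ∨ n ≠ 0 := by
      by_contra! h
      exact hp (by simp [h.1, h.2])
    have : 0 < m ^ 2 + n ^ 2 := by rcases hmn with h | h <;> positivity
    exact_mod_cast (show 1 ≤ m ^ 2 + n ^ 2 by linarith)
  linarith [sq_add_sq_div_five_le_norm_lattice_sq m n]

theorem lattice_injective : Function.Injective lattice := by
  refine (injective_iff_map_eq_zero _).2 fun p hp => ?_
  by_contra hne
  have := one_fifth_le_norm_lattice_sq hne
  rw [hp, norm_zero] at this
  norm_num at this

theorem isClosed_range_lattice : IsClosed (lattice.range : Set Plane) := by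
  refine isClosed_of_pairwise_le_dist (ε := 2 / 5) (by norm_num) ?_
  rintro _ ⟨p, rfl⟩ _ ⟨q, rfl⟩ hpq
  have h := one_fifth_le_norm_lattice_sq (sub_ne_zero.2 fun h => hpq (congrArg lattice h))
  rw [dist_eq_norm, ← map_sub]
  nlinarith [norm_nonneg (lattice (p - q))]

/-- The three vertices given are the circumcentres of the Delaunay triangles `(0, t₁, t₁ + t₂)`,
`(0, t₁ + t₂, t₂)` and `(0, t₂, -t₁)`. -/
def vertex : Fin 6 → Plane :=
  symmHexVertex !₂[9921 / 40000, 19892249 / 45820000] !₂[-5279 / 40000, 22097199 / 45820000]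
    !₂[-9921 / 40000, 19892249 / 45820000]

def hexagon : Set Plane := convexHull ℝ (range vertex)

theorem inner_vertex_lt_norm_sq {i j : Fin 6} (hij : i ≠ j) :
    ⟪vertex i, vertex j⟫ < ‖vertex i‖ ^ 2 := by
  fin_cases i <;> fin_cases j <;> simp_all [vertex, symmHexVertex, inner_eq, norm_sq_eq] <;>
    norm_num

theorem vertex_injective : Function.Injective vertex :=
  injective_of_inner_lt_norm_sq fun _ _ => inner_vertex_lt_norm_sq

theorem vertex_notMem_convexHull (i : Fin 6) : vertex i ∉ convexHull ℝ (vertex '' {j | j ≠ i}) :=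
  notMem_convexHull_image_of_inner_lt_norm_sq fun _ hj => inner_vertex_lt_norm_sq hj.symm

theorem norm_vertex_le (i : Fin 6) : ‖vertex i‖ ≤ 1 / 2 := by
  rw [← sq_le_sq₀ (norm_nonneg _) (by norm_num), norm_sq_eq]
  fin_cases i <;> simp [vertex, symmHexVertex] <;> norm_num

theorem norm_le_of_mem_hexagon {x : Plane} (hx : x ∈ hexagon) : ‖x‖ ≤ 1 / 2 := by
  have := convexHull_min (by rintro _ ⟨i, rfl⟩; simpa using norm_vertex_le i)
    (convex_closedBall (0 : Plane) (1 / 2)) hx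
  simpa using this

theorem neg_mem_hexagon {z : Plane} (hz : z ∈ hexagon) : -z ∈ hexagon :=
  neg_mem_convexHull_symmHexVertex _ _ _ hz

theorem zero_mem_hexagon : (0 : Plane) ∈ hexagon := by
  have hv : vertex 0 ∈ hexagon := subset_convexHull ℝ _ (mem_range_self 0)
  have h := convex_convexHull ℝ (range vertex) hv (neg_mem_hexagon hv)
    (by norm_num : (0 : ℝ) ≤ 1 / 2) (by norm_num : (0 : ℝ) ≤ 1 / 2) (by norm_num)
  rwa [smul_neg, add_neg_cancel] at h

theorem vertex_mem_voronoiCell (i : Fin 6) :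
    vertex i ∈ voronoiCell (lattice.range : Set Plane) 0 := by
  rintro _ ⟨⟨m, n⟩, rfl⟩
  rw [dist_zero_right, dist_eq_norm]
  by_cases hfar : 5 ≤ m ^ 2 + n ^ 2
  · refine norm_le_norm_sub_of_norm_le_half (norm_vertex_le i) ?_
    have : (5 : ℝ) ≤ (m : ℝ) ^ 2 + (n : ℝ) ^ 2 := by exact_mod_cast hfar
    nlinarith [sq_add_sq_div_five_le_norm_lattice_sq m n, norm_nonneg (lattice (m, n))]
  · rw [norm_le_norm_sub_iff, inner_eq, norm_sq_eq]
    have hm : -2 ≤ m ∧ m ≤ 2 := by constructor <;> nlinarith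
    have hn : -2 ≤ n ∧ n ≤ 2 := by constructor <;> nlinarith
    obtain ⟨hm₁, hm₂⟩ := hm
    obtain ⟨hn₁, hn₂⟩ := hn
    interval_cases m <;> interval_cases n <;> fin_cases i <;> simp [vertex, symmHexVertex] <;>
      norm_num

def edgeNeighbour : Fin 6 → ℤ × ℤ := ![(1, 1), (0, 1), (-1, 0), (-1, -1), (0, -1), (1, 0)]

theorem edgeNeighbour_spec (i : Fin 6) :
    0 < cross (vertex i) (vertex (i + 1)) ∧ 0 < ‖lattice (edgeNeighbour i)‖ ^ 2 / 2 ∧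
      ⟪vertex i, lattice (edgeNeighbour i)⟫ = ‖lattice (edgeNeighbour i)‖ ^ 2 / 2 ∧
      ⟪vertex (i + 1), lattice (edgeNeighbour i)⟫ = ‖lattice (edgeNeighbour i)‖ ^ 2 / 2 := by
  fin_cases i <;> simp [vertex, symmHexVertex, edgeNeighbour, cross, inner_eq, norm_sq_eq] <;>
    norm_num

theorem hexagon_eq_voronoiCell : hexagon = voronoiCell (lattice.range : Set Plane) 0 := by
  refine (convexHull_min ?_ (convex_voronoiCell_zero _)).antisymm fun y hy => ?_
  · rintro _ ⟨i, rfl⟩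
    exact vertex_mem_voronoiCell i
  obtain ⟨i, hiy, hyi⟩ := exists_cross_symmHexVertex_nonneg _ _ _ y
  obtain ⟨hcross, hc, hi, hi'⟩ := edgeNeighbour_spec i
  have hyℓ := hy _ ⟨edgeNeighbour i, rfl⟩
  rw [dist_zero_right, dist_eq_norm, norm_le_norm_sub_iff] at hyℓ
  exact mem_of_cross_nonneg (convex_convexHull ℝ _) zero_mem_hexagon
    (subset_convexHull ℝ _ (mem_range_self i)) (subset_convexHull ℝ _ (mem_range_self (i + 1)))
    hcross hiy hyi hc hi hi' (by linarith)

theorem vadd_hexagon (p : ℤ × ℤ) :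
    lattice p +ᵥ hexagon = voronoiCell (lattice.range : Set Plane) (lattice p) := by
  rw [hexagon_eq_voronoiCell, vadd_voronoiCell_zero lattice.range ⟨p, rfl⟩]

theorem le_dist_of_inner_vertex_le {μ p x y : Plane}
    (hp : ∀ i, ⟪μ - (2 : ℝ) • p, vertex i⟫ ≤ ⟪μ - (2 : ℝ) • p, p⟫)
    (hd : 0.9920 ^ 2 ≤ ‖μ - (2 : ℝ) • p‖ ^ 2) (hx : x ∈ hexagon) (hy : y ∈ hexagon) :
    0.9920 ≤ dist (μ + x) y := by
  refine le_trans ?_ (norm_sub_two_smul_le_dist (fun z => neg_mem_hexagon)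
    (fun z hz => inner_le_of_mem_convexHull (by rintro _ ⟨i, rfl⟩; exact hp i) hz) hx hy)
  exact (sq_le_sq₀ (by norm_num) (norm_nonneg _)).1 hd

theorem le_dist_of_norm_sq_le {μ x y : Plane} (hμ : 1.992 ^ 2 ≤ ‖μ‖ ^ 2) (hx : x ∈ hexagon)
    (hy : y ∈ hexagon) : 0.9920 ≤ dist (μ + x) y := by
  have := norm_sub_two_mul_le_dist (fun z => norm_le_of_mem_hexagon) μ hx hy
  have := (sq_le_sq₀ (by norm_num) (norm_nonneg _)).1 hμ
  linarith

theorem le_dist_lattice_add_of_mem_hexagon {k l : ℤ} (hkl : (k, l) ≠ 0) {x y : Plane}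
    (hx : x ∈ hexagon) (hy : y ∈ hexagon) : 0.9920 ≤ dist (lattice (3 * k, 2 * l) + x) y := by
  wlog hpos : 0 < k ∨ (k = 0 ∧ 0 < l) generalizing k l x y
  · have hneg : (3 * -k, 2 * -l) = -(3 * k, 2 * l) := by ext <;> simp
    calc (0.9920 : ℝ) ≤ dist (lattice (3 * -k, 2 * -l) + y) x :=
          this (by simpa using hkl) hy hx (by simp at hkl; omega)
      _ = dist (lattice (3 * k, 2 * l) + x) y := by
          rw [hneg, map_neg, dist_eq_norm, dist_eq_norm, ← norm_neg]
          congr 1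
          abel
  rcases le_or_gt 3 (k ^ 2 + l ^ 2) with hfar | hnear
  · refine le_dist_of_norm_sq_le ?_ hx hy
    have : (3 : ℝ) ≤ (k : ℝ) ^ 2 + (l : ℝ) ^ 2 := by exact_mod_cast hfar
    nlinarith [eight_fifths_mul_le_norm_lattice_sq k l]
  have hk : -1 ≤ k ∧ k ≤ 1 := by constructor <;> nlinarith [sq_nonneg l]
  have hl : -1 ≤ l ∧ l ≤ 1 := by constructor <;> nlinarith [sq_nonneg k]
  -- In the short cases `2 • p` is the point of `hexagon - hexagon = 2 • hexagon` nearest to `μ`.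
  obtain ⟨rfl, rfl⟩ | ⟨rfl, rfl⟩ | ⟨rfl, rfl⟩ | ⟨rfl, rfl⟩ :
      (k = 0 ∧ l = 1) ∨ (k = 1 ∧ l = -1) ∨ (k = 1 ∧ l = 0) ∨ (k = 1 ∧ l = 1) := by omega
  · exact le_dist_of_inner_vertex_le (p := !₂[-19 / 100, 2291 / 5000])
      (by intro i; fin_cases i <;> simp [vertex, symmHexVertex, inner_eq] <;> norm_num)
      (by simp [norm_sq_eq]; norm_num) hx hy
  · exact le_dist_of_norm_sq_le (by simp [norm_sq_eq]; norm_num) hx hy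
  · exact le_dist_of_inner_vertex_le (p := !₂[9921 / 40000, 0])
      (by intro i; fin_cases i <;> simp [vertex, symmHexVertex, inner_eq] <;> norm_num)
      (by simp [norm_sq_eq]; norm_num) hx hy
  · exact le_dist_of_inner_vertex_le (p := vertex 0)
      (by intro i; fin_cases i <;> simp [vertex, symmHexVertex, inner_eq] <;> norm_num)
      (by simp [vertex, symmHexVertex, norm_sq_eq]; norm_num) hx hy

def colour (p : ℤ × ℤ) : Fin 6 := finProdFinEquiv ((p.1 : ZMod 3), (p.2 : ZMod 2))

theorem exists_eq_of_colour_eq {p q : ℤ × ℤ} (h : colour p = colour q) :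
    ∃ k l : ℤ, p - q = (3 * k, 2 * l) := by
  obtain ⟨h₁, h₂⟩ := Prod.mk.inj (finProdFinEquiv.injective h)
  obtain ⟨k, hk⟩ := (ZMod.intCast_eq_intCast_iff_dvd_sub _ _ 3).1 h₁.symm
  obtain ⟨l, hl⟩ := (ZMod.intCast_eq_intCast_iff_dvd_sub _ _ 2).1 h₂.symm
  exact ⟨k, l, Prod.ext (by simpa using hk) (by simpa using hl)⟩

end HexTiling

open HexTiling in
/-- There exist a closed convex hexagon H ⊂ ℝ² of Euclidean diameter at
most 1 (the convex hull of 6 points, each of which is a genuine vertex), a countable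
family of isometric copies of H tiling the plane (their union is ℝ² and their interiors
are pairwise disjoint), and a 6-colouring of the tiles such that any two distinct tiles
of the same colour are at distance at least 0.9920 from each other. This improves Ivanov's bound d(6) ≈ 0.991445. -/
theorem statement18 :
    ∃ (H : Set Plane) (v : Fin 6 → Plane),
      Function.Injective v ∧
      (∀ i : Fin 6, v i ∉ convexHull ℝ (v '' {j : Fin 6 | j ≠ i})) ∧
      H = convexHull ℝ (Set.range v) ∧
      (∀ p ∈ H, ∀ q ∈ H, dist p q ≤ 1) ∧
      ∃ (T : ℕ → Set Plane) (col : ℕ → Fin 6),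
        (∀ n : ℕ, ∃ f : Plane ≃ᵢ Plane, T n = f '' H) ∧
        (⋃ n : ℕ, T n) = Set.univ ∧
        (∀ n m : ℕ, n ≠ m → interior (T n) ∩ interior (T m) = ∅) ∧
        (∀ n m : ℕ, n ≠ m → col n = col m →
          ∀ p ∈ T n, ∀ q ∈ T m, (0.9920 : ℝ) ≤ dist p q) := by
  let e : ℕ ≃ ℤ × ℤ := (Denumerable.eqv (ℤ × ℤ)).symm
  refine ⟨hexagon, vertex, vertex_injective, vertex_notMem_convexHull, rfl, fun x hx y hy => ?_,
    fun n => lattice (e n) +ᵥ hexagon, fun n => colour (e n),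
    fun n => ⟨IsometryEquiv.addLeft (lattice (e n)), image_vadd.symm⟩, ?_, fun n m hnm => ?_, ?_⟩
  · linarith [dist_le_norm_add_norm x y, norm_le_of_mem_hexagon hx, norm_le_of_mem_hexagon hy]
  · refine eq_univ_of_forall fun x => mem_iUnion.2 ?_
    obtain ⟨_, ⟨p, rfl⟩, hx⟩ :=
      exists_mem_voronoiCell isClosed_range_lattice ⟨0, zero_mem _⟩ x
    exact ⟨e.symm p, by rwa [e.apply_symm_apply, vadd_hexagon]⟩
  · simp only [vadd_hexagon, ← disjoint_iff_inter_eq_empty]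
    exact disjoint_interior_voronoiCell ⟨_, rfl⟩ ⟨_, rfl⟩
      (lattice_injective.ne (e.injective.ne hnm))
  · rintro n m hnm hcol _ ⟨x, hx, rfl⟩ _ ⟨y, hy, rfl⟩
    obtain ⟨k, l, hkl⟩ := exists_eq_of_colour_eq hcol
    have hne : (k, l) ≠ 0 := by
      intro h
      rw [Prod.mk_eq_zero] at h
      obtain ⟨rfl, rfl⟩ := h
      exact hnm (e.injective (sub_eq_zero.1 (by simp [hkl])))
    calc (0.9920 : ℝ) ≤ dist (lattice (3 * k, 2 * l) + x) y :=
          le_dist_lattice_add_of_mem_hexagon hne hx hy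
      _ = dist (lattice (e n) +ᵥ x) (lattice (e m) +ᵥ y) := by
        rw [← hkl, map_sub, dist_eq_norm, dist_eq_norm, vadd_eq_add, vadd_eq_add]
        congr 1
        abel
end
end
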